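/- arXiv:2410.14811 — 3 statements merged into one kernel-verified Lean document; each statement's English description precedes it below -/
import Mathlib

section
/- Fix d ≥ 1, N ≥ 1, and a lower-triangular real array (H_{i,j})_{0 ≤ j ≤ i ≤ N−1}. For L, R > 0 let W(L, R) ⊆ ℝ be the set of all values f_N obtained from choices of x₀ ∈ E, vectors b_k ∈ E with ‖b_k‖ ≤ 1, and reals f_k (for 0 ≤ k ≤ N) satisfying the following, where t_k := −√(1 − ‖b_k‖²) for 0 ≤ k ≤ N, x_{i+1} := x₀ − (1/L)·Σ_{j=0}^{i} H_{i,j}·b_j for 0 ≤ i ≤ N−1, and the star index is defined by x_⋆ := 0, f_⋆ := 0, b_⋆ := 0, t_⋆ := −1: (i) ‖x₀‖ ≤ R; (ii) for all k, l ∈ {0, …, N, ⋆}: ⟪b_k, x_l − (1/L)·b_l − x_k + (1/L)·b_k⟫ + t_k·(f_l − (1/L)·t_l − f_k + (1/L)·t_k) ≤ 0. Then for every η > 0, W(L, η·R) = {η·t : t ∈ W(η·L, R)}. -/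
open Metric Set
open scoped RealInnerProductSpace

noncomputable section

/-- The iterates `x₀` and `x_{k+1} = x₀ - (1/L) Σ_{j=0}^{k} H_{k,j} b_j` of the
normalized (epismooth) gradient method. -/
def epiIter {d : ℕ} (H : ℕ → ℕ → ℝ) (L : ℝ) (x₀ : EuclideanSpace ℝ (Fin d))
    (b : ℕ → EuclideanSpace ℝ (Fin d)) : ℕ → EuclideanSpace ℝ (Fin d)
  | 0 => x₀
  | (k + 1) => x₀ - (1 / L) • ∑ j ∈ Finset.range (k + 1), H k j • b j

/-- The attainable-value set of the finite-dimensional epismooth performance estimation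
problem: values `f_N` over all data `(x₀, b_k, f_k)` with `‖b_k‖ ≤ 1`, `‖x₀‖ ≤ R`,
satisfying the smooth-set interpolation inequalities over the index set
`{0, …, N, ⋆}` (star encoded as `none`, with `x⋆ = 0`, `f⋆ = 0`, `b⋆ = 0`, `t⋆ = -1`
and `t_k = -√(1 - ‖b_k‖²)`). -/
def Wset (d N : ℕ) (H : ℕ → ℕ → ℝ) (L R : ℝ) : Set ℝ :=
  {v | ∃ (x₀ : EuclideanSpace ℝ (Fin d)) (b : ℕ → EuclideanSpace ℝ (Fin d)) (fv : ℕ → ℝ),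
    (∀ k ≤ N, ‖b k‖ ≤ 1) ∧ ‖x₀‖ ≤ R ∧ v = fv N ∧
    ∀ k l : Option ℕ, (∀ m ∈ k, m ≤ N) → (∀ m ∈ l, m ≤ N) →
      ⟪k.elim 0 b, l.elim 0 (epiIter H L x₀ b) - (1 / L) • l.elim 0 b
          - k.elim 0 (epiIter H L x₀ b) + (1 / L) • k.elim 0 b⟫
        + (k.elim (-1) fun m => -Real.sqrt (1 - ‖b m‖ ^ 2)) *
          (l.elim 0 fv - (1 / L) * (l.elim (-1) fun m => -Real.sqrt (1 - ‖b m‖ ^ 2))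
            - k.elim 0 fv + (1 / L) * (k.elim (-1) fun m => -Real.sqrt (1 - ‖b m‖ ^ 2)))
        ≤ 0}

/-!
Rescaling `(x₀, f) ↦ (η x₀, η f)` while keeping the normals `b_k` (hence the `t_k`) fixed and
replacing `L` by `L / η` scales every iterate by `η` and multiplies each interpolation
inequality by `η > 0`, so feasible data are mapped to feasible data; the inverse rescaling
by `η⁻¹` gives the reverse inclusion.
-/

theorem Option.elim_zero_smul {R α M : Type*} [Zero M] [SMulZeroClass R M] (c : R)
    (f : α → M) (o : Option α) : o.elim 0 (c • f) = c • o.elim 0 f := by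
  cases o <;> simp

theorem epiIter_div_smul {d : ℕ} (H : ℕ → ℕ → ℝ) (L c : ℝ) (x₀ : EuclideanSpace ℝ (Fin d))
    (b : ℕ → EuclideanSpace ℝ (Fin d)) :
    epiIter H (L / c) (c • x₀) b = c • epiIter H L x₀ b := by
  funext m
  cases m with
  | zero => rfl
  | succ k =>
    simp only [epiIter, Pi.smul_apply, one_div_div, div_eq_mul_one_div c L, smul_sub, mul_smul]

theorem smul_mem_Wset {d N : ℕ} {H : ℕ → ℕ → ℝ} {L R v c : ℝ} (hc : 0 ≤ c)
    (hv : v ∈ Wset d N H L R) : c * v ∈ Wset d N H (L / c) (c * R) := by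
  obtain ⟨x₀, b, f, hb, hx₀, rfl, hinterp⟩ := hv
  refine ⟨c • x₀, b, c • f, hb, ?_, rfl, fun k l hk hl => ?_⟩
  · rw [norm_smul, Real.norm_of_nonneg hc]
    exact mul_le_mul_of_nonneg_left hx₀ hc
  · have hscaled := mul_nonpos_of_nonneg_of_nonpos hc (hinterp k l hk hl)
    rw [epiIter_div_smul, one_div_div, div_eq_mul_one_div c L]
    refine Eq.trans_le ?_ hscaled
    simp only [Option.elim_zero_smul, inner_add_right, inner_sub_right, real_inner_smul_right,
      mul_smul, smul_eq_mul]
    ring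

theorem epismooth_pep_rescaling_general (d N : ℕ) (H : ℕ → ℕ → ℝ)
    (L R : ℝ) (η : ℝ) (hη : 0 < η) :
    Wset d N H L (η * R) = (fun t => η * t) '' Wset d N H (η * L) R := by
  apply subset_antisymm
  · intro v hv
    refine ⟨η⁻¹ * v, ?_, mul_inv_cancel_left₀ hη.ne' v⟩
    have hscaled := smul_mem_Wset (inv_nonneg.2 hη.le) hv
    rwa [div_inv_eq_mul, mul_comm L η, inv_mul_cancel_left₀ hη.ne'] at hscaled
  · rintro _ ⟨t, ht, rfl⟩
    have hscaled := smul_mem_Wset hη.le ht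
    rwa [mul_div_cancel_left₀ L hη.ne'] at hscaled

/-- Rescaling property of the epismooth performance estimation value set:
`W(L, ηR) = η · W(ηL, R)`. -/
theorem epismooth_pep_rescaling (d N : ℕ) (hd : 1 ≤ d) (hN : 1 ≤ N) (H : ℕ → ℕ → ℝ)
    (L R : ℝ) (hL : 0 < L) (hR : 0 < R) (η : ℝ) (hη : 0 < η) :
    Wset d N H L (η * R) = (fun t => η * t) '' Wset d N H (η * L) R :=
  epismooth_pep_rescaling_general d N H L R η hη
end
end

section
/- Let L > 0, 0 < R < 1/L, N ≥ 1, and h₀, …, h_{N−1} ∈ [0,1]. Define the ball-pen function f(x) = 1/L − √(1/L² − x²) for |x| ≤ 1/L, with derivative f'(x) = x/√(1/L² − x²) for |x| < 1/L, and let E_f = {(x, t) ∈ ℝ² : |x| ≤ 1/L and t ≥ f(x)} be its epigraph. Then: (i) E_f is a nonempty closed convex L-smooth subset of ℝ²; (ii) the iterates defined by x₀ = R and x_{k+1} = x_k − (h_k/L)·f'(x_k)/√(1 + f'(x_k)²) satisfy x_k = R·∏_{i=0}^{k−1}(1 − h_i) for all 0 ≤ k ≤ N; and (iii) consequently f(x_N)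 − f(0) = 1/L − √(1/L² − R²·∏_{i=0}^{N−1}(1 − h_i)²). -/
open Metric Set
open scoped RealInnerProductSpace

noncomputable section

variable {F : Type*} [NormedAddCommGroup F] [InnerProductSpace ℝ F]

/-- The normal cone of a set `C` at a point `z`. -/
def normalCone (C : Set F) (z : F) : Set F :=
  {v | ∀ x ∈ C, ⟪v, x - z⟫ ≤ 0}

/-- A set `C` is `β`-smooth if at every boundary point `z`, every unit normal vector `n`
gives a closed ball of radius `1/β` centered at `z - (1/β) n` contained in `C`. -/
def IsSmoothSet (β : ℝ) (C : Set F) : Prop :=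
  ∀ z ∈ frontier C, ∀ n ∈ normalCone C z, ‖n‖ = 1 →
    closedBall (z - (1 / β) • n) (1 / β) ⊆ C

/-- The ball-pen function `f(x) = 1/L - √(1/L² - x²)`. -/
def ballPen (L x : ℝ) : ℝ := 1 / L - Real.sqrt (1 / L ^ 2 - x ^ 2)

/-- The derivative of the ball-pen function, `f'(x) = x / √(1/L² - x²)`. -/
def ballPen' (L x : ℝ) : ℝ := x / Real.sqrt (1 / L ^ 2 - x ^ 2)

/-- The epigraph `{(x, t) : |x| ≤ 1/L, t ≥ f(x)}` of the ball-pen function, as a subset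
of the Euclidean plane. -/
def ballPenEpi (L : ℝ) : Set (EuclideanSpace ℝ (Fin 2)) :=
  {p | |p 0| ≤ 1 / L ∧ ballPen L (p 0) ≤ p 1}

/-! The epigraph of the ball-pen function is the Minkowski sum of the vertical ray
`{0} × [1/L, ∞)` and the closed disc of radius `r = 1/L`. Every set `C = K + B̄(0, r)` is
`1/r`-smooth: if `z = k + u ∈ C` with `‖u‖ ≤ r` and `n` is a unit normal at `z`, testing `n`
against `k + r n ∈ C` gives `⟪n, u⟫ ≥ r`, so `u = r n` by the equality case of Cauchy–Schwarz, and
the ball of radius `r` about `z - r n = k` lies in `C`.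

For `|x| < 1/L` the normalized slope `f'(x) / √(1 + f'(x)²)` equals `L x`, so each descent step
multiplies the iterate by `1 - h_k`, and the iterates stay in `[0, R]`. -/

open scoped Pointwise

theorem closedBall_sub_smul_subset_add_closedBall {K : Set F} {r : ℝ} {z n : F}
    (hz : z ∈ K + closedBall (0 : F) r) (hn : n ∈ normalCone (K + closedBall (0 : F) r) z)
    (hn1 : ‖n‖ = 1) :
    closedBall (z - r • n) r ⊆ K + closedBall (0 : F) r := by
  obtain ⟨k, hk, u, hu, rfl⟩ := hz
  rw [mem_closedBall_zero_iff] at hu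
  have hr : 0 ≤ r := (norm_nonneg u).trans hu
  have hkn : k + r • n ∈ K + closedBall (0 : F) r := add_mem_add hk <| by
    rw [mem_closedBall_zero_iff, norm_smul, hn1, Real.norm_of_nonneg hr, mul_one]
  have hnu : r ≤ ⟪n, u⟫ := by
    have := hn _ hkn
    rw [add_sub_add_left_eq_sub, inner_sub_right, real_inner_smul_right,
      real_inner_self_eq_norm_sq, hn1] at this
    linarith
  have hu_eq : u = r • n := by
    have hsq : ‖u - r • n‖ ^ 2 ≤ 0 := by
      rw [norm_sub_sq_real, norm_smul, hn1, Real.norm_of_nonneg hr, real_inner_smul_right,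
        real_inner_comm]
      nlinarith [pow_le_pow_left₀ (norm_nonneg u) hu 2]
    rwa [← sub_eq_zero, ← norm_eq_zero, ← sq_eq_zero_iff, ← (sq_nonneg _).ge_iff_eq']
  rw [hu_eq, add_sub_cancel_right, ← singleton_add_closedBall_zero]
  exact add_subset_add_right (singleton_subset_iff.2 hk)

theorem isSmoothSet_add_closedBall {K : Set F} {β : ℝ}
    (hC : IsClosed (K + closedBall (0 : F) (1 / β))) :
    IsSmoothSet β (K + closedBall (0 : F) (1 / β)) :=
  fun _ hz _ hn hn1 => closedBall_sub_smul_subset_add_closedBall (hC.frontier_subset hz) hn hn1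

def verticalRay (a : ℝ) : Set (EuclideanSpace ℝ (Fin 2)) := {p | p 0 = 0 ∧ a ≤ p 1}

theorem isClosed_verticalRay (a : ℝ) : IsClosed (verticalRay a) :=
  (isClosed_eq (EuclideanSpace.proj 0).continuous continuous_const).inter
    (isClosed_le continuous_const (EuclideanSpace.proj 1).continuous)

theorem verticalRay_nonempty (a : ℝ) : (verticalRay a).Nonempty :=
  ⟨!₂[0, a], by simp [verticalRay]⟩

theorem convex_verticalRay (a : ℝ) : Convex ℝ (verticalRay a) := by
  rintro p ⟨hp0, hp1⟩ q ⟨hq0, hq1⟩ s t hs ht hst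
  refine ⟨by simp [hp0, hq0], ?_⟩
  simp only [PiLp.add_apply, PiLp.smul_apply, smul_eq_mul]
  have : a = s * a + t * a := by rw [← add_mul, hst, one_mul]
  nlinarith [mul_le_mul_of_nonneg_left hp1 hs, mul_le_mul_of_nonneg_left hq1 ht]

theorem EuclideanSpace.mem_closedBall_zero_iff_sq_add_sq {r : ℝ} (hr : 0 ≤ r)
    {u : EuclideanSpace ℝ (Fin 2)} :
    u ∈ closedBall 0 r ↔ u 0 ^ 2 + u 1 ^ 2 ≤ r ^ 2 := by
  rw [mem_closedBall_zero_iff, ← sq_le_sq₀ (norm_nonneg _) hr, EuclideanSpace.norm_sq_eq,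
    Fin.sum_univ_two, Real.norm_eq_abs, Real.norm_eq_abs, sq_abs, sq_abs]

theorem ballPenEpi_eq_verticalRay_add_closedBall {L : ℝ} (hL : 0 < L) :
    ballPenEpi L = verticalRay (1 / L) + closedBall 0 (1 / L) := by
  have hr : 0 ≤ 1 / L := by positivity
  ext p
  simp only [ballPenEpi, ballPen, mem_ofPred_eq, ← one_div_pow]
  generalize 1 / L = r at *
  constructor
  · rintro ⟨hp0, hp1⟩
    refine ⟨!₂[0, max r (p 1)], ⟨by simp, by simp⟩, p - !₂[0, max r (p 1)],
      (EuclideanSpace.mem_closedBall_zero_iff_sq_add_sq hr).2 ?_, add_sub_cancel _ _⟩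
    have hp0' : p 0 ^ 2 ≤ r ^ 2 := by
      simpa only [sq_abs] using pow_le_pow_left₀ (abs_nonneg _) hp0 2
    simp only [PiLp.sub_apply, Matrix.cons_val_zero, Matrix.cons_val_one, Matrix.cons_val_fin_one,
      sub_zero]
    rcases le_total r (p 1) with hrp | hpr
    · simpa [max_eq_right hrp] using hp0'
    · rw [max_eq_left hpr]
      have := (Real.le_sqrt (by linarith) (by linarith)).1
        (show r - p 1 ≤ √(r ^ 2 - p 0 ^ 2) by linarith)
      nlinarith
  · rintro ⟨v, ⟨hv0, hv1⟩, u, hu, rfl⟩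
    rw [EuclideanSpace.mem_closedBall_zero_iff_sq_add_sq hr] at hu
    simp only [PiLp.add_apply, hv0, zero_add]
    refine ⟨abs_le_of_sq_le_sq (by nlinarith) hr, ?_⟩
    have := Real.neg_sqrt_le_of_sq_le (show u 1 ^ 2 ≤ r ^ 2 - u 0 ^ 2 by linarith)
    linarith

theorem ballPen'_div_sqrt_one_add_sq {L x : ℝ} (hL : 0 < L) (hx : |x| < 1 / L) :
    ballPen' L x / √(1 + ballPen' L x ^ 2) = L * x := by
  have hpos : 0 < 1 / L ^ 2 - x ^ 2 := by
    rw [← one_div_pow, sub_pos, ← sq_abs]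
    exact pow_lt_pow_left₀ hx (abs_nonneg x) two_ne_zero
  rw [ballPen']
  set s := √(1 / L ^ 2 - x ^ 2)
  have hs : 0 < s := Real.sqrt_pos.2 hpos
  have hs2 : s ^ 2 + x ^ 2 = 1 / L ^ 2 := by rw [Real.sq_sqrt hpos.le, sub_add_cancel]
  have hnorm : 1 + (x / s) ^ 2 = (1 / (L * s)) ^ 2 := by
    field_simp
    rw [hs2, one_div_mul_cancel (by positivity)]
  rw [hnorm, Real.sqrt_sq (by positivity)]
  field_simp

theorem ballPen_descent_eq_mul_prod {L R : ℝ} {N : ℕ} {h x : ℕ → ℝ} (hL : 0 < L) (hR0 : 0 < R)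
    (hR : R < 1 / L) (hh : ∀ i < N, h i ∈ Icc 0 1) (hx0 : x 0 = R)
    (hstep : ∀ k < N, x (k + 1) =
      x k - h k / L * (ballPen' L (x k) / √(1 + ballPen' L (x k) ^ 2))) :
    ∀ k ≤ N, x k = R * ∏ i ∈ Finset.range k, (1 - h i) := by
  intro k hk
  induction k with
  | zero => simpa using hx0
  | succ k ih =>
    have hkN : k < N := hk
    have hP : ∏ i ∈ Finset.range k, (1 - h i) ∈ unitInterval := unitInterval.prod_mem fun i hi =>
      Icc.mem_iff_one_sub_mem.1 (hh i ((Finset.mem_range.1 hi).trans hkN))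
    have hxk : |x k| < 1 / L := by
      rw [ih hkN.le, abs_of_nonneg (mul_nonneg hR0.le hP.1)]
      exact (mul_le_of_le_one_right hR0.le hP.2).trans_lt hR
    rw [hstep k hkN, ballPen'_div_sqrt_one_add_sq hL hxk, ih hkN.le, Finset.prod_range_succ]
    field_simp

theorem ballPen_zero {L : ℝ} (hL : 0 < L) : ballPen L 0 = 0 := by
  rw [ballPen, ← one_div_pow, zero_pow two_ne_zero, sub_zero, Real.sqrt_sq (by positivity),
    sub_self]

theorem ballPen_epismooth_descent_general (L R : ℝ) (hL : 0 < L) (hR0 : 0 < R) (hR : R < 1 / L)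
    (N : ℕ) (h : ℕ → ℝ) (hh : ∀ i < N, h i ∈ Set.Icc (0 : ℝ) 1) :
    ((ballPenEpi L).Nonempty ∧ IsClosed (ballPenEpi L) ∧ Convex ℝ (ballPenEpi L) ∧
      IsSmoothSet L (ballPenEpi L)) ∧
    ∀ x : ℕ → ℝ, x 0 = R →
      (∀ k < N, x (k + 1) =
        x k - h k / L * (ballPen' L (x k) / Real.sqrt (1 + ballPen' L (x k) ^ 2))) →
      (∀ k ≤ N, x k = R * ∏ i ∈ Finset.range k, (1 - h i)) ∧
      ballPen L (x N) - ballPen L 0 =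
        1 / L - Real.sqrt (1 / L ^ 2 - R ^ 2 * ∏ i ∈ Finset.range N, (1 - h i) ^ 2) := by
  have hclosed : IsClosed (verticalRay (1 / L) + closedBall 0 (1 / L)) :=
    (isClosed_verticalRay _).add_right_of_isCompact (isCompact_closedBall _ _)
  rw [ballPenEpi_eq_verticalRay_add_closedBall hL]
  refine ⟨⟨(verticalRay_nonempty _).add (nonempty_closedBall.2 (by positivity)), hclosed,
    (convex_verticalRay _).add (convex_closedBall _ _), isSmoothSet_add_closedBall hclosed⟩, ?_⟩
  intro x hx0 hstep
  have hx := ballPen_descent_eq_mul_prod hL hR0 hR hh hx0 hstep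
  refine ⟨hx, ?_⟩
  rw [hx N le_rfl, ballPen_zero hL, ballPen, sub_zero, mul_pow, Finset.prod_pow]

/-- Epismooth gradient descent on the ball-pen function: the epigraph is a nonempty
closed convex `L`-smooth set, the normalized gradient iterates from `x₀ = R` are
`x_k = R ∏_{i<k} (1 - h_i)`, and the final objective gap is
`1/L - √(1/L² - R² ∏_{i<N} (1 - h_i)²)`. -/
theorem ballPen_epismooth_descent (L R : ℝ) (hL : 0 < L) (hR0 : 0 < R) (hR : R < 1 / L)
    (N : ℕ) (hN : 1 ≤ N) (h : ℕ → ℝ) (hh : ∀ i < N, h i ∈ Set.Icc (0 : ℝ) 1) :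
    ((ballPenEpi L).Nonempty ∧ IsClosed (ballPenEpi L) ∧ Convex ℝ (ballPenEpi L) ∧
      IsSmoothSet L (ballPenEpi L)) ∧
    ∀ x : ℕ → ℝ, x 0 = R →
      (∀ k < N, x (k + 1) =
        x k - h k / L * (ballPen' L (x k) / Real.sqrt (1 + ballPen' L (x k) ^ 2))) →
      (∀ k ≤ N, x k = R * ∏ i ∈ Finset.range k, (1 - h i)) ∧
      ballPen L (x N) - ballPen L 0 =
        1 / L - Real.sqrt (1 / L ^ 2 - R ^ 2 * ∏ i ∈ Finset.range N, (1 - h i) ^ 2) :=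
  ballPen_epismooth_descent_general L R hL hR0 hR N h hh
end
end

section
/- Let L > 0, 0 < τ < 1/L, N ≥ 1, h₀, …, h_{N−1} ≥ 0, and R ∈ ℝ with R − τ·Σ_{i=0}^{N−1} h_i ≥ τ. Define the ball-Huber function f : ℝ → ℝ by f(x) = 1/L − √(1/L² − x²) for |x| ≤ τ and f(x) = (τ/√(1/L² − τ²))·|x| + 1/L − (1/L²)/√(1/L² − τ²) for |x| > τ. Then: (i) f is convex and its epigraph {(x, t) ∈ ℝ² : t ≥ f(x)} is an L-smooth set; (ii) the iterates defined by x₀ = R and x_{k+1} = x_k − (h_k/L)·f'(x_k)/√(1 + f'(x_k)²) satisfy x_k = R − τ·Σ_{i=0}^{k−1} h_i for all 0 ≤ k ≤ N; and (iii) f(x_N) − f(0) = 1/L − (1/L² − τ·(R − τ·Σ_{i=0}^{N−1} h_i))/√(1/L² − τ²). -/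
/-! On `[-τ, τ]` the ball-Huber function `f` is the lower arc of the circle of radius `1/L` centred
at `(0, 1/L)`, and outside it continues along the tangents at `±τ`. Its derivative is
`c / √(1/L² - c²)` with `c = clamp τ x`, which is monotone, so `f` is convex. At `(a, f a)` the
outer unit normal is `L • (c, -√(1/L² - c²))`, so the inner ball of radius `1/L` is centred at
`(a - c, 1/L + τ / √(1/L² - τ²) * |a - c|)`: the centre lies on a cone, and every ball of radius
`1/L` centred on that cone lies in the epigraph (Cauchy–Schwarz against the linear pieces,
monotonicity of `t ↦ τ t + √(1/L² - τ²) √(1/L² - t²)` on the arc). The normalized gradient step is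
`x ↦ x - h * clamp τ x`, i.e. `x - τ h` as long as the iterate stays `≥ τ`, which the bound on `R`
guarantees. -/

open Metric Set
open scoped RealInnerProductSpace

noncomputable section

variable {F : Type*} [NormedAddCommGroup F] [InnerProductSpace ℝ F]

/-- The ball-Huber function: the ball-pen function for `|x| ≤ τ`, extended linearly
(continuously differentiably) for `|x| > τ`. -/
def ballHuber (L τ x : ℝ) : ℝ :=
  if |x| ≤ τ then 1 / L - Real.sqrt (1 / L ^ 2 - x ^ 2)
  else τ / Real.sqrt (1 / L ^ 2 - τ ^ 2) * |x| + 1 / L -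
    (1 / L ^ 2) / Real.sqrt (1 / L ^ 2 - τ ^ 2)

section SqrtInequalities

variable {c τ : ℝ}

theorem mul_add_sqrt_mul_sqrt_le {v : ℝ} (hτ : τ ^ 2 ≤ c) (hv : v ^ 2 ≤ c) :
    τ * v + √(c - τ ^ 2) * √(c - v ^ 2) ≤ c := by
  have hτ' := Real.sq_sqrt (sub_nonneg.2 hτ)
  have hv' := Real.sq_sqrt (sub_nonneg.2 hv)
  nlinarith [sq_nonneg (τ - v), sq_nonneg (√(c - τ ^ 2) - √(c - v ^ 2))]

theorem sqrt_sub_sq_mul_le {t : ℝ} (hτ0 : 0 ≤ τ) (hτ : τ ^ 2 ≤ c) (ht : t ≤ τ) :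
    √(c - τ ^ 2) * t ≤ τ * √(c - t ^ 2) := by
  rcases le_or_gt t 0 with ht0 | ht0
  · exact (mul_nonpos_of_nonneg_of_nonpos (Real.sqrt_nonneg _) ht0).trans (by positivity)
  · have ht2 : t ^ 2 ≤ τ ^ 2 := pow_le_pow_left₀ ht0.le ht 2
    refine (le_abs_self _).trans (abs_le_of_sq_le_sq ?_ (by positivity))
    rw [mul_pow, mul_pow, Real.sq_sqrt (by linarith), Real.sq_sqrt (by linarith)]
    nlinarith

theorem mul_add_sqrt_mul_sqrt_le_of_le {u v : ℝ} (hτ0 : 0 ≤ τ) (hτ : τ ^ 2 < c) (hv : v ^ 2 ≤ c)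
    (hvu : v ≤ u) (hu : |u| ≤ τ) :
    τ * v + √(c - τ ^ 2) * √(c - v ^ 2) ≤ τ * u + √(c - τ ^ 2) * √(c - u ^ 2) := by
  have hu2 : u ^ 2 ≤ τ ^ 2 := sq_le_sq' (abs_le.1 hu).1 (abs_le.1 hu).2
  have hW₁ : 0 ≤ √(c - v ^ 2) := Real.sqrt_nonneg _
  have hW₂ : 0 < √(c - u ^ 2) := Real.sqrt_pos.2 (by linarith)
  have hdiff : (√(c - v ^ 2) - √(c - u ^ 2)) * (√(c - v ^ 2) + √(c - u ^ 2)) =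
      (u - v) * (u + v) := by
    linear_combination Real.sq_sqrt (show 0 ≤ c - v ^ 2 by linarith) -
      Real.sq_sqrt (show 0 ≤ c - u ^ 2 by linarith)
  have hsum : √(c - τ ^ 2) * (u + v) ≤ τ * (√(c - v ^ 2) + √(c - u ^ 2)) := by
    linarith [sqrt_sub_sq_mul_le hτ0 hτ.le (le_of_abs_le hu),
      sqrt_sub_sq_mul_le hτ0 hτ.le (hvu.trans (le_of_abs_le hu))]
  have key : √(c - τ ^ 2) * (√(c - v ^ 2) - √(c - u ^ 2)) ≤ τ * (u - v) := by
    refine le_of_mul_le_mul_right ?_ (add_pos_of_nonneg_of_pos hW₁ hW₂)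
    calc √(c - τ ^ 2) * (√(c - v ^ 2) - √(c - u ^ 2)) * (√(c - v ^ 2) + √(c - u ^ 2))
        = (u - v) * (√(c - τ ^ 2) * (u + v)) := by rw [mul_assoc, hdiff]; ring
      _ ≤ (u - v) * (τ * (√(c - v ^ 2) + √(c - u ^ 2))) :=
        mul_le_mul_of_nonneg_left hsum (sub_nonneg.2 hvu)
      _ = τ * (u - v) * (√(c - v ^ 2) + √(c - u ^ 2)) := by ring
  linarith

theorem monotoneOn_div_sqrt_sub_sq : MonotoneOn (fun t => t / √(c - t ^ 2)) {t | t ^ 2 < c} := by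
  intro t₁ (h₁ : t₁ ^ 2 < c) t₂ (h₂ : t₂ ^ 2 < c) h₁₂
  have hc : 0 < c := (sq_nonneg t₁).trans_lt h₁
  rw [div_le_div_iff₀ (Real.sqrt_pos.2 (sub_pos.2 h₁)) (Real.sqrt_pos.2 (sub_pos.2 h₂))]
  have hsq : (t₂ * √(c - t₁ ^ 2)) ^ 2 - (t₁ * √(c - t₂ ^ 2)) ^ 2 = c * ((t₂ - t₁) * (t₂ + t₁)) := by
    rw [mul_pow, mul_pow, Real.sq_sqrt (by linarith), Real.sq_sqrt (by linarith)]
    ring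
  have hW₁ := Real.sqrt_nonneg (c - t₁ ^ 2)
  have hW₂ := Real.sqrt_nonneg (c - t₂ ^ 2)
  rcases le_total 0 (t₂ + t₁) with h | h
  · refine (le_abs_self _).trans (abs_le_of_sq_le_sq ?_ (by nlinarith))
    nlinarith [mul_nonneg hc.le (mul_nonneg (sub_nonneg.2 h₁₂) h)]
  · have := abs_le_of_sq_le_sq (a := t₂ * √(c - t₁ ^ 2)) (b := -(t₁ * √(c - t₂ ^ 2)))
      (by nlinarith [mul_nonneg hc.le (mul_nonneg (sub_nonneg.2 h₁₂) (neg_nonneg.2 h))])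
      (by nlinarith)
    linarith [neg_abs_le (t₂ * √(c - t₁ ^ 2))]

theorem sqrt_one_add_div_sqrt_sub_sq {t : ℝ} (ht : t ^ 2 < c) :
    √(1 + (t / √(c - t ^ 2)) ^ 2) = √c / √(c - t ^ 2) := by
  have hpos : 0 < c - t ^ 2 := sub_pos.2 ht
  rw [← Real.sqrt_div' _ hpos.le, div_pow, Real.sq_sqrt hpos.le, one_add_div hpos.ne',
    sub_add_cancel]

theorem hasDerivAt_sub_sqrt_sub_sq (a : ℝ) {x : ℝ} (hx : x ^ 2 < c) :
    HasDerivAt (fun y => a - √(c - y ^ 2)) (x / √(c - x ^ 2)) x := by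
  have hpos : 0 < c - x ^ 2 := sub_pos.2 hx
  have h := (((hasDerivAt_pow 2 x).const_sub c).sqrt hpos.ne').const_sub a
  refine h.congr_deriv ?_
  field_simp
  norm_num

end SqrtInequalities

section Epigraph

variable {f : ℝ → ℝ}

theorem apply_one_eq_of_mem_frontier_epigraph (hf : Continuous f) {z : EuclideanSpace ℝ (Fin 2)}
    (hz : z ∈ frontier {p : EuclideanSpace ℝ (Fin 2) | f (p 0) ≤ p 1}) : z 1 = f (z 0) :=
  (frontier_le_subset_eq (hf.comp (by fun_prop)) (by fun_prop) hz).symm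

theorem real_inner_fin_two (x y : EuclideanSpace ℝ (Fin 2)) : ⟪x, y⟫ = x 0 * y 0 + x 1 * y 1 := by
  simp only [PiLp.inner_apply, RCLike.inner_apply, Real.ringHom_apply, Fin.sum_univ_two,
    Fin.isValue]
  ring

theorem normalCone_epigraph_of_hasDerivAt {d : ℝ} {z n : EuclideanSpace ℝ (Fin 2)}
    (hd : HasDerivAt f d (z 0)) (hz : z 1 = f (z 0))
    (hn : n ∈ normalCone {p : EuclideanSpace ℝ (Fin 2) | f (p 0) ≤ p 1} z) :
    n 0 = -n 1 * d ∧ n 1 ≤ 0 := by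
  have hmem : ∀ t y, f t ≤ y → n 0 * (t - z 0) + n 1 * (y - z 1) ≤ 0 := fun t y hty => by
    simpa [real_inner_fin_two] using hn !₂[t, y] (by simpa using hty)
  have hmax : IsLocalMax (fun t => n 0 * (t - z 0) + n 1 * (f t - z 1)) (z 0) :=
    Filter.Eventually.of_forall fun t => by simpa [hz] using hmem t (f t) le_rfl
  have hderiv := ((hasDerivAt_id (z 0)).sub_const (z 0)).const_mul (n 0) |>.add
    ((hd.sub_const (z 1)).const_mul (n 1))
  have hcrit : n 0 * 1 + n 1 * d = 0 := hmax.hasDerivAt_eq_zero hderiv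
  refine ⟨by linarith, ?_⟩
  simpa [hz] using hmem (z 0) (z 1 + 1) (by linarith)

theorem normalCone_epigraph_of_hasDerivAt_of_norm_eq_one {d : ℝ} {z n : EuclideanSpace ℝ (Fin 2)}
    (hd : HasDerivAt f d (z 0)) (hz : z 1 = f (z 0))
    (hn : n ∈ normalCone {p : EuclideanSpace ℝ (Fin 2) | f (p 0) ≤ p 1} z) (hn1 : ‖n‖ = 1) :
    n 0 = d / √(1 + d ^ 2) ∧ n 1 = -1 / √(1 + d ^ 2) := by
  obtain ⟨h0, h1⟩ := normalCone_epigraph_of_hasDerivAt hd hz hn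
  have hsq : n 0 ^ 2 + n 1 ^ 2 = 1 := by
    simpa [EuclideanSpace.norm_eq, Fin.sum_univ_two] using hn1
  have hpos : 0 < √(1 + d ^ 2) := Real.sqrt_pos.2 (by positivity)
  have hμ : -n 1 * √(1 + d ^ 2) = 1 := by
    refine (pow_left_inj₀ (mul_nonneg (neg_nonneg.2 h1) hpos.le) zero_le_one two_ne_zero).1 ?_
    rw [h0] at hsq
    rw [mul_pow, Real.sq_sqrt (by positivity), one_pow]
    linear_combination hsq
  constructor
  · rw [h0, eq_div_iff hpos.ne', mul_right_comm, hμ, one_mul]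
  · rw [eq_div_iff hpos.ne']
    linarith

theorem closedBall_subset_epigraph {q : EuclideanSpace ℝ (Fin 2)} {r : ℝ}
    (h : ∀ u, (u - q 0) ^ 2 ≤ r ^ 2 → f u + √(r ^ 2 - (u - q 0) ^ 2) ≤ q 1) :
    closedBall q r ⊆ {p : EuclideanSpace ℝ (Fin 2) | f (p 0) ≤ p 1} := by
  intro p hp
  have hdist : (p 0 - q 0) ^ 2 + (p 1 - q 1) ^ 2 ≤ r ^ 2 := by
    have := pow_le_pow_left₀ dist_nonneg (mem_closedBall.1 hp) 2
    rwa [EuclideanSpace.dist_eq, Real.sq_sqrt (by positivity), Fin.sum_univ_two,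
      Real.dist_eq, Real.dist_eq, sq_abs, sq_abs] at this
  have hvert : q 1 - p 1 ≤ √(r ^ 2 - (p 0 - q 0) ^ 2) :=
    (le_abs_self _).trans (Real.abs_le_sqrt (by nlinarith))
  have := h (p 0) (by nlinarith)
  show f (p 0) ≤ p 1
  linarith

end Epigraph

def clamp (τ x : ℝ) : ℝ := max (-τ) (min τ x)

section Clamp

variable {τ x : ℝ}

theorem clamp_of_abs_le (hx : |x| ≤ τ) : clamp τ x = x := by
  rw [clamp, min_eq_right (abs_le.1 hx).2, max_eq_right (abs_le.1 hx).1]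

theorem clamp_of_le (hτ : 0 ≤ τ) (hx : τ ≤ x) : clamp τ x = τ := by
  rw [clamp, min_eq_left hx, max_eq_right (by linarith)]

theorem clamp_neg (hτ : 0 ≤ τ) (x : ℝ) : clamp τ (-x) = -clamp τ x := by
  simp only [clamp, max_def, min_def]
  split_ifs <;> linarith

theorem abs_clamp_le (hτ : 0 ≤ τ) (x : ℝ) : |clamp τ x| ≤ τ :=
  abs_le.2 ⟨le_max_left _ _, max_le (by linarith) (min_le_left _ _)⟩

theorem monotone_clamp : Monotone (clamp τ) :=
  fun _ _ h => max_le_max le_rfl (min_le_min le_rfl h)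

end Clamp

section BallHuber

variable {L τ : ℝ}

theorem sq_lt_one_div_sq_of_abs_le {t : ℝ} (ht : |t| ≤ τ) (hτ : τ < 1 / L) :
    t ^ 2 < 1 / L ^ 2 := by
  rw [← one_div_pow, ← sq_abs]
  exact pow_lt_pow_left₀ (ht.trans_lt hτ) (abs_nonneg t) two_ne_zero

theorem clamp_sq_lt (hτ0 : 0 ≤ τ) (hτ : τ < 1 / L) (x : ℝ) : clamp τ x ^ 2 < 1 / L ^ 2 :=
  sq_lt_one_div_sq_of_abs_le (abs_clamp_le hτ0 x) hτ

theorem ballHuber_neg (x : ℝ) : ballHuber L τ (-x) = ballHuber L τ x := by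
  simp only [ballHuber, abs_neg, neg_sq]

theorem ballHuber_of_abs_le {x : ℝ} (hx : |x| ≤ τ) :
    ballHuber L τ x = 1 / L - √(1 / L ^ 2 - x ^ 2) :=
  if_pos hx

theorem ballHuber_of_le (hτ0 : 0 ≤ τ) (hτ : τ < 1 / L) {x : ℝ} (hx : τ ≤ x) :
    ballHuber L τ x = 1 / L - (1 / L ^ 2 - τ * x) / √(1 / L ^ 2 - τ ^ 2) := by
  rcases hx.eq_or_lt with rfl | hx
  · have hτL := sub_pos.2 (sq_lt_one_div_sq_of_abs_le (abs_of_nonneg hτ0).le hτ)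
    rw [ballHuber_of_abs_le (abs_of_nonneg hτ0).le, sub_right_inj,
      eq_div_iff (Real.sqrt_pos.2 hτL).ne', Real.mul_self_sqrt hτL.le]
    ring
  · rw [ballHuber, if_neg (by rw [abs_of_pos (hτ0.trans_lt hx)]; exact hx.not_ge),
      abs_of_pos (hτ0.trans_lt hx)]
    ring

theorem ballHuber_zero (hτ0 : 0 ≤ τ) (hτ : τ < 1 / L) : ballHuber L τ 0 = 0 := by
  rw [ballHuber_of_abs_le (by simpa using hτ0), sub_eq_zero, zero_pow two_ne_zero, sub_zero,
    ← one_div_pow, Real.sqrt_sq (hτ0.trans hτ.le)]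

theorem hasDerivAt_ballHuber_of_nonneg (hτ0 : 0 < τ) (hτ : τ < 1 / L) {x : ℝ} (hx : 0 ≤ x) :
    HasDerivAt (ballHuber L τ) (clamp τ x / √(1 / L ^ 2 - clamp τ x ^ 2)) x := by
  rcases lt_or_ge x τ with hxτ | hxτ
  · have habs : |x| < τ := abs_lt.2 ⟨by linarith, hxτ⟩
    rw [clamp_of_abs_le habs.le]
    refine (hasDerivAt_sub_sqrt_sub_sq (1 / L) (sq_lt_one_div_sq_of_abs_le habs.le hτ))
      |>.congr_of_eventuallyEq ?_
    filter_upwards [(isOpen_lt continuous_abs continuous_const).mem_nhds habs] with y hy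
    exact ballHuber_of_abs_le hy.le
  rw [clamp_of_le hτ0.le hxτ]
  have hlin : HasDerivWithinAt (ballHuber L τ) (τ / √(1 / L ^ 2 - τ ^ 2)) (Ici τ) x := by
    have h := (((hasDerivAt_id x).const_mul τ).const_sub (1 / L ^ 2)).div_const
      (√(1 / L ^ 2 - τ ^ 2)) |>.const_sub (1 / L)
    refine (h.hasDerivWithinAt.congr (fun y hy => ballHuber_of_le hτ0.le hτ hy)
      (ballHuber_of_le hτ0.le hτ hxτ)).congr_deriv ?_
    ring
  obtain rfl | hxτ := hxτ.eq_or_lt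
  · have hball : HasDerivWithinAt (ballHuber L τ) (τ / √(1 / L ^ 2 - τ ^ 2)) (Icc (-τ) τ) τ :=
      (hasDerivAt_sub_sqrt_sub_sq (1 / L) (sq_lt_one_div_sq_of_abs_le (abs_of_pos hτ0).le hτ))
        |>.hasDerivWithinAt.congr (fun y hy => ballHuber_of_abs_le (abs_le.2 hy))
          (ballHuber_of_abs_le (abs_of_pos hτ0).le)
    have h := hball.union hlin
    rw [Icc_union_Ici_eq_Ici (by linarith)] at h
    exact h.hasDerivAt (Ici_mem_nhds (by linarith))
  · exact hlin.hasDerivAt (Ici_mem_nhds hxτ)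

theorem hasDerivAt_ballHuber (hτ0 : 0 < τ) (hτ : τ < 1 / L) (x : ℝ) :
    HasDerivAt (ballHuber L τ) (clamp τ x / √(1 / L ^ 2 - clamp τ x ^ 2)) x := by
  rcases le_total 0 x with hx | hx
  · exact hasDerivAt_ballHuber_of_nonneg hτ0 hτ hx
  · have h := (hasDerivAt_ballHuber_of_nonneg hτ0 hτ (neg_nonneg.2 hx)).comp x (hasDerivAt_neg x)
    rw [clamp_neg hτ0.le, neg_sq,
      show ballHuber L τ ∘ Neg.neg = ballHuber L τ from funext ballHuber_neg] at h
    exact h.congr_deriv (by ring)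

theorem deriv_ballHuber (hτ0 : 0 < τ) (hτ : τ < 1 / L) (x : ℝ) :
    deriv (ballHuber L τ) x = clamp τ x / √(1 / L ^ 2 - clamp τ x ^ 2) :=
  (hasDerivAt_ballHuber hτ0 hτ x).deriv

theorem differentiable_ballHuber (hτ0 : 0 < τ) (hτ : τ < 1 / L) :
    Differentiable ℝ (ballHuber L τ) :=
  fun x => (hasDerivAt_ballHuber hτ0 hτ x).differentiableAt

theorem convexOn_ballHuber (hτ0 : 0 < τ) (hτ : τ < 1 / L) : ConvexOn ℝ univ (ballHuber L τ) := by
  refine Monotone.convexOn_univ_of_deriv (differentiable_ballHuber hτ0 hτ) fun a b hab => ?_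
  rw [deriv_ballHuber hτ0 hτ, deriv_ballHuber hτ0 hτ]
  exact monotoneOn_div_sqrt_sub_sq (clamp_sq_lt hτ0.le hτ a) (clamp_sq_lt hτ0.le hτ b)
    (monotone_clamp hab)

theorem ballHuber_add_sqrt_le_of_nonneg (hτ0 : 0 ≤ τ) (hτ : τ < 1 / L) {b u : ℝ} (hb : 0 ≤ b)
    (hu : (u - b) ^ 2 ≤ 1 / L ^ 2) :
    ballHuber L τ u + √(1 / L ^ 2 - (u - b) ^ 2) ≤ 1 / L + τ / √(1 / L ^ 2 - τ ^ 2) * b := by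
  have hτL := sq_lt_one_div_sq_of_abs_le (abs_of_nonneg hτ0).le hτ
  have hs : 0 < √(1 / L ^ 2 - τ ^ 2) := Real.sqrt_pos.2 (sub_pos.2 hτL)
  set s := √(1 / L ^ 2 - τ ^ 2)
  suffices key : s * ballHuber L τ u + s * √(1 / L ^ 2 - (u - b) ^ 2) ≤ s / L + τ * b by
    calc _ = (s * ballHuber L τ u + s * √(1 / L ^ 2 - (u - b) ^ 2)) / s := by field_simp
      _ ≤ (s / L + τ * b) / s := by gcongr
      _ = _ := by field_simp
  have hlin : ∀ y, τ ≤ y → s * ballHuber L τ y = s / L - (1 / L ^ 2 - τ * y) := fun y hy => by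
    rw [ballHuber_of_le hτ0 hτ hy, mul_sub, mul_div_cancel₀ _ hs.ne', mul_one_div]
  rcases le_or_gt |u| τ with hu' | hu'
  · have hmono := mul_add_sqrt_mul_sqrt_le_of_le hτ0 hτL hu (by linarith : u - b ≤ u) hu'
    rw [ballHuber_of_abs_le hu', mul_sub, mul_one_div]
    linarith
  rcases lt_abs.1 hu' with hpos | hneg
  · have hcs := mul_add_sqrt_mul_sqrt_le hτL.le hu
    linarith [hlin u hpos.le]
  · have hcs := mul_add_sqrt_mul_sqrt_le (v := -(u - b)) hτL.le (by rwa [neg_sq])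
    rw [neg_sq] at hcs
    rw [← ballHuber_neg u]
    linarith [hlin (-u) hneg.le, mul_nonneg hτ0 hb]

theorem ballHuber_add_sqrt_le (hτ0 : 0 ≤ τ) (hτ : τ < 1 / L) {b u : ℝ}
    (hu : (u - b) ^ 2 ≤ 1 / L ^ 2) :
    ballHuber L τ u + √(1 / L ^ 2 - (u - b) ^ 2) ≤ 1 / L + τ / √(1 / L ^ 2 - τ ^ 2) * |b| := by
  rcases le_total 0 b with hb | hb
  · rw [abs_of_nonneg hb]
    exact ballHuber_add_sqrt_le_of_nonneg hτ0 hτ hb hu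
  · have hsq : (-u - -b) ^ 2 = (u - b) ^ 2 := by ring
    have h := ballHuber_add_sqrt_le_of_nonneg hτ0 hτ (neg_nonneg.2 hb) (hsq ▸ hu)
    rwa [ballHuber_neg, hsq, ← abs_of_nonpos hb] at h

theorem ballHuber_add_sqrt_sub_clamp_sq (hτ0 : 0 ≤ τ) (hτ : τ < 1 / L) (a : ℝ) :
    ballHuber L τ a + √(1 / L ^ 2 - clamp τ a ^ 2) =
      1 / L + τ / √(1 / L ^ 2 - τ ^ 2) * |a - clamp τ a| := by
  wlog ha : 0 ≤ a generalizing a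
  · have h := this (-a) (by linarith)
    rwa [ballHuber_neg, clamp_neg hτ0, neg_sq, ← neg_sub', abs_neg] at h
  rcases le_or_gt a τ with haτ | haτ
  · have ha' : |a| ≤ τ := abs_le.2 ⟨by linarith, haτ⟩
    rw [clamp_of_abs_le ha', ballHuber_of_abs_le ha', sub_self, abs_zero, mul_zero, add_zero,
      sub_add_cancel]
  · have hτL := sub_pos.2 (sq_lt_one_div_sq_of_abs_le (abs_of_nonneg hτ0).le hτ)
    rw [clamp_of_le hτ0 haτ.le, ballHuber_of_le hτ0 hτ haτ.le, abs_of_pos (sub_pos.2 haτ)]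
    field_simp
    linear_combination Real.sq_sqrt hτL.le

theorem deriv_ballHuber_div_sqrt_one_add_sq (hτ0 : 0 < τ) (hτ : τ < 1 / L) (x : ℝ) :
    deriv (ballHuber L τ) x / √(1 + deriv (ballHuber L τ) x ^ 2) = L * clamp τ x := by
  have hL : 0 < L := one_div_pos.1 (hτ0.trans hτ)
  have hc := clamp_sq_lt hτ0.le hτ x
  have hw := Real.sqrt_pos.2 (sub_pos.2 hc)
  have hsqrt : √(1 / L ^ 2) = 1 / L := by rw [← one_div_pow, Real.sqrt_sq (by positivity)]
  rw [deriv_ballHuber hτ0 hτ, sqrt_one_add_div_sqrt_sub_sq hc, hsqrt,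
    div_div_div_cancel_right₀ hw.ne']
  field_simp

theorem isSmoothSet_epigraph_ballHuber (hτ0 : 0 < τ) (hτ : τ < 1 / L) :
    IsSmoothSet L {p : EuclideanSpace ℝ (Fin 2) | ballHuber L τ (p 0) ≤ p 1} := by
  have hL : 0 < L := one_div_pos.1 (hτ0.trans hτ)
  intro z hz n hn hn1
  have hz1 := apply_one_eq_of_mem_frontier_epigraph (differentiable_ballHuber hτ0 hτ).continuous hz
  obtain ⟨hn0, hn1⟩ := normalCone_epigraph_of_hasDerivAt_of_norm_eq_one
    (hasDerivAt_ballHuber hτ0 hτ (z 0)) hz1 hn hn1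
  have hc := clamp_sq_lt hτ0.le hτ (z 0)
  have hw := Real.sqrt_pos.2 (sub_pos.2 hc)
  have hsqrt : √(1 / L ^ 2) = 1 / L := by rw [← one_div_pow, Real.sqrt_sq (by positivity)]
  rw [sqrt_one_add_div_sqrt_sub_sq hc, hsqrt] at hn0 hn1
  have hq0 : (z - (1 / L) • n) 0 = z 0 - clamp τ (z 0) := by
    rw [PiLp.sub_apply, PiLp.smul_apply, smul_eq_mul, hn0, div_div_div_cancel_right₀ hw.ne']
    field_simp
  have hq1 : (z - (1 / L) • n) 1 = ballHuber L τ (z 0) + √(1 / L ^ 2 - clamp τ (z 0) ^ 2) := by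
    rw [PiLp.sub_apply, PiLp.smul_apply, smul_eq_mul, hn1, hz1]
    generalize √(1 / L ^ 2 - clamp τ (z 0) ^ 2) = w at hw ⊢
    field_simp
    ring
  refine closedBall_subset_epigraph fun u hu => ?_
  rw [hq0, one_div_pow] at hu ⊢
  rw [hq1, ballHuber_add_sqrt_sub_clamp_sq hτ0.le hτ]
  exact ballHuber_add_sqrt_le hτ0.le hτ hu

end BallHuber

theorem ballHuber_epismooth_descent_general (L τ : ℝ) (hτ0 : 0 < τ) (hτ : τ < 1 / L)
    (N : ℕ) (h : ℕ → ℝ) (hh : ∀ i < N, 0 ≤ h i) (R : ℝ)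
    (hRbound : τ ≤ R - τ * ∑ i ∈ Finset.range N, h i) :
    (ConvexOn ℝ Set.univ (ballHuber L τ) ∧
      IsSmoothSet L {p : EuclideanSpace ℝ (Fin 2) | ballHuber L τ (p 0) ≤ p 1}) ∧
    ∀ x : ℕ → ℝ, x 0 = R →
      (∀ k < N, x (k + 1) =
        x k - h k / L * (deriv (ballHuber L τ) (x k) /
          Real.sqrt (1 + deriv (ballHuber L τ) (x k) ^ 2))) →
      (∀ k ≤ N, x k = R - τ * ∑ i ∈ Finset.range k, h i) ∧
      ballHuber L τ (x N) - ballHuber L τ 0 =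
        1 / L - (1 / L ^ 2 - τ * (R - τ * ∑ i ∈ Finset.range N, h i)) /
          Real.sqrt (1 / L ^ 2 - τ ^ 2) := by
  refine ⟨⟨convexOn_ballHuber hτ0 hτ, isSmoothSet_epigraph_ballHuber hτ0 hτ⟩, fun x hx0 hstep => ?_⟩
  have hL : 0 < L := one_div_pos.1 (hτ0.trans hτ)
  have hx : ∀ k ≤ N, x k = R - τ * ∑ i ∈ Finset.range k, h i := by
    intro k hk
    induction k with
    | zero => simp [hx0]
    | succ k ih =>
      have hxk := ih (by omega)
      have hsum : ∑ i ∈ Finset.range k, h i ≤ ∑ i ∈ Finset.range N, h i :=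
        Finset.sum_le_sum_of_subset_of_nonneg (Finset.range_subset_range.2 (by omega))
          fun i hi _ => hh i (Finset.mem_range.1 hi)
      have hτx : τ ≤ x k := by
        rw [hxk]
        linarith [mul_le_mul_of_nonneg_left hsum hτ0.le]
      rw [hstep k hk, deriv_ballHuber_div_sqrt_one_add_sq hτ0 hτ, clamp_of_le hτ0.le hτx, hxk,
        Finset.sum_range_succ]
      field_simp
      ring
  refine ⟨hx, ?_⟩
  rw [hx N le_rfl, ballHuber_zero hτ0.le hτ, sub_zero, ballHuber_of_le hτ0.le hτ hRbound]

/-- Epismooth gradient descent on the ball-Huber function: the function is convex with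
`L`-smooth epigraph, the normalized gradient iterates from `x₀ = R` are
`x_k = R - τ Σ_{i<k} h_i`, and the final objective gap is
`1/L - (1/L² - τ(R - τ Σ_{i<N} h_i)) / √(1/L² - τ²)`. -/
theorem ballHuber_epismooth_descent (L τ : ℝ) (hL : 0 < L) (hτ0 : 0 < τ) (hτ : τ < 1 / L)
    (N : ℕ) (hN : 1 ≤ N) (h : ℕ → ℝ) (hh : ∀ i < N, 0 ≤ h i) (R : ℝ)
    (hRbound : τ ≤ R - τ * ∑ i ∈ Finset.range N, h i) :
    (ConvexOn ℝ Set.univ (ballHuber L τ) ∧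
      IsSmoothSet L {p : EuclideanSpace ℝ (Fin 2) | ballHuber L τ (p 0) ≤ p 1}) ∧
    ∀ x : ℕ → ℝ, x 0 = R →
      (∀ k < N, x (k + 1) =
        x k - h k / L * (deriv (ballHuber L τ) (x k) /
          Real.sqrt (1 + deriv (ballHuber L τ) (x k) ^ 2))) →
      (∀ k ≤ N, x k = R - τ * ∑ i ∈ Finset.range k, h i) ∧
      ballHuber L τ (x N) - ballHuber L τ 0 =
        1 / L - (1 / L ^ 2 - τ * (R - τ * ∑ i ∈ Finset.range N, h i)) /
          Real.sqrt (1 / L ^ 2 - τ ^ 2) :=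
  ballHuber_epismooth_descent_general L τ hτ0 hτ N h hh R hRbound
end
end
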